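/- arXiv:1805.00737 — 3 statements merged into one kernel-verified Lean document; each statement's English description precedes it below -/
import Mathlib

section
/- Let F, S, H, K1, K̂, B, K be real n×n matrices with K̂ = K1 + F·H. Let T_a, T ∈ ℝ, let w : ℝ → ℝⁿ be continuous, ρ : ℝ → ℝⁿ be continuously differentiable, and let e : ℝ → ℝⁿ be differentiable and satisfy, for all t ≥ T_a, ė(t) = F·e(t) + S·(w(t−T) + B·K·ρ(t−T)) − K1·ρ(t−T) − H·ρ̇(t−T). Then for all t ≥ T_a: e(t) = exp((t−T_a)·F)·(e(T_a) + H·ρ(T_a−T)) − H·ρ(t−T) + ∫_{T_a}^{t} exp((t−τ)·F)·[S·w(τ−T) + (S·B·K − K̂)·ρ(τ−T)] dτ. -/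
/-!
Set `g(t) = e(t) + H ρ(t − T)`. Since `K̂ = K1 + F H`, the term `H ρ̇(t − T)` cancels and `g` solves
the linear equation `ġ = F g + f` with continuous forcing
`f(τ) = S w(τ − T) + (S B K − K̂) ρ(τ − T)`. Differentiating `τ ↦ exp((t − τ) F) g(τ)` and
integrating from `T_a` to `t` gives the variation-of-constants formula for `g`, and subtracting
`H ρ(t − T)` gives the formula for `e`.
-/

open NormedSpace Set

theorem hasDerivAt_exp_sub_smul {𝔸 : Type*} [NormedRing 𝔸] [NormedAlgebra ℝ 𝔸] [CompleteSpace 𝔸]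
    (A : 𝔸) (t τ : ℝ) :
    HasDerivAt (fun s : ℝ => exp ((t - s) • A)) (-(exp ((t - τ) • A) * A)) τ := by
  simpa [Function.comp_def] using
    (hasDerivAt_exp_smul_const (𝕂 := ℝ) A (t - τ)).scomp τ ((hasDerivAt_id τ).const_sub t)

section VariationOfConstants

variable {E : Type*} [NormedAddCommGroup E] [NormedSpace ℝ E] [CompleteSpace E] (A : E →L[ℝ] E)
  {g f : ℝ → E} {a t : ℝ}

theorem hasDerivAt_exp_sub_smul_apply {τ : ℝ} (hg : HasDerivAt g (A (g τ) + f τ) τ) :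
    HasDerivAt (fun s => exp ((t - s) • A) (g s)) (exp ((t - τ) • A) (f τ)) τ := by
  refine ((hasDerivAt_exp_sub_smul A t τ).clm_apply hg).congr_deriv ?_
  simp only [neg_apply, mul_apply_eq_comp, map_add]
  abel

theorem eq_exp_smul_add_integral_of_hasDerivAt (hat : a ≤ t) (hf : ContinuousOn f (Icc a t))
    (hg : ∀ τ ∈ Icc a t, HasDerivAt g (A (g τ) + f τ) τ) :
    g t = exp ((t - a) • A) (g a) + ∫ τ in a..t, exp ((t - τ) • A) (f τ) := by
  have hexp : Continuous fun s : ℝ => exp ((t - s) • A) :=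
    continuous_iff_continuousAt.2 fun s => (hasDerivAt_exp_sub_smul A t s).continuousAt
  rw [← uIcc_of_le hat] at hf hg
  rw [intervalIntegral.integral_eq_sub_of_hasDerivAt
    (fun τ hτ => hasDerivAt_exp_sub_smul_apply A (hg τ hτ))
    (hexp.continuousOn.clm_apply hf).intervalIntegrable]
  simp

end VariationOfConstants

theorem replay_error_explicit_solution_general {n : ℕ}
    (F S H K1 Khat B K : EuclideanSpace ℝ (Fin n) →L[ℝ] EuclideanSpace ℝ (Fin n))
    (hKhat : Khat = K1 + F * H)
    (T_a T : ℝ)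
    (w ρ ρ' : ℝ → EuclideanSpace ℝ (Fin n))
    (hw : Continuous w)
    (hρ : ∀ t : ℝ, HasDerivAt ρ (ρ' t) t)
    (e : ℝ → EuclideanSpace ℝ (Fin n))
    (hode : ∀ t : ℝ, T_a ≤ t →
      HasDerivAt e
        (F (e t) + S (w (t - T) + (B * K) (ρ (t - T)))
          - K1 (ρ (t - T)) - H (ρ' (t - T))) t) :
    ∀ t : ℝ, T_a ≤ t →
      e t = (NormedSpace.exp ((t - T_a) • F)) (e T_a + H (ρ (T_a - T)))
            - H (ρ (t - T))
            + ∫ τ in T_a..t,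
                (NormedSpace.exp ((t - τ) • F))
                  (S (w (τ - T)) + (S * B * K - Khat) (ρ (τ - T))) := by
  intro t ht
  have hρc : Continuous ρ := continuous_iff_continuousAt.2 fun s => (hρ s).continuousAt
  have hf : Continuous fun τ => S (w (τ - T)) + (S * B * K - Khat) (ρ (τ - T)) := by fun_prop
  have hg : ∀ τ ∈ Icc T_a t, HasDerivAt (fun s => e s + H (ρ (s - T)))
      (F (e τ + H (ρ (τ - T))) + (S (w (τ - T)) + (S * B * K - Khat) (ρ (τ - T)))) τ := by
    intro τ hτ
    refine ((hode τ hτ.1).add (H.hasFDerivAt.comp_hasDerivAt τ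
      ((hρ (τ - T)).comp_sub_const τ T))).congr_deriv ?_
    simp only [hKhat, mul_apply_eq_comp, add_apply, sub_apply, map_add]
    abel
  have hsol := eq_exp_smul_add_integral_of_hasDerivAt F ht hf.continuousOn hg
  exact (eq_sub_of_add_eq hsol).trans (by abel)

/-- **Explicit solution of the estimation-error dynamics under replay attack
(Statement 1).**
Matrices are continuous linear maps on Euclidean space, with matrix product
given by `*` (composition). Given `Khat = K1 + F·H`, a continuous process
noise `w`, a continuously differentiable measurement noise `ρ` (with
derivative `ρ'`), and an error trajectory `e` satisfying, for all `t ≥ T_a`,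
`ė(t) = F e(t) + S (w(t−T) + B K ρ(t−T)) − K1 ρ(t−T) − H ρ̇(t−T)`,
the variation-of-constants formula with integration by parts gives, for all
`t ≥ T_a`,
`e(t) = exp((t−T_a) F) (e(T_a) + H ρ(T_a−T)) − H ρ(t−T)
        + ∫_{T_a}^t exp((t−τ) F) (S w(τ−T) + (S B K − Khat) ρ(τ−T)) dτ`. -/
theorem replay_error_explicit_solution {n : ℕ}
    (F S H K1 Khat B K : EuclideanSpace ℝ (Fin n) →L[ℝ] EuclideanSpace ℝ (Fin n))
    (hKhat : Khat = K1 + F * H)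
    (T_a T : ℝ)
    (w ρ ρ' : ℝ → EuclideanSpace ℝ (Fin n))
    (hw : Continuous w)
    (hρ : ∀ t : ℝ, HasDerivAt ρ (ρ' t) t) (hρ' : Continuous ρ')
    (e : ℝ → EuclideanSpace ℝ (Fin n))
    (hode : ∀ t : ℝ, T_a ≤ t →
      HasDerivAt e
        (F (e t) + S (w (t - T) + (B * K) (ρ (t - T)))
          - K1 (ρ (t - T)) - H (ρ' (t - T))) t) :
    ∀ t : ℝ, T_a ≤ t →
      e t = (NormedSpace.exp ((t - T_a) • F)) (e T_a + H (ρ (T_a - T)))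
            - H (ρ (t - T))
            + ∫ τ in T_a..t,
                (NormedSpace.exp ((t - τ) • F))
                  (S (w (τ - T)) + (S * B * K - Khat) (ρ (τ - T))) :=
  replay_error_explicit_solution_general F S H K1 Khat B K hKhat T_a T w ρ ρ' hw hρ e hode
end

section
/- (Detectability of replay attacks under watermarking.) Let F, S, H, K1, K̂, B, K be real n×n matrices with K̂ = K1 + F·H and S = I − H, and let κ, μ > 0 satisfy ‖exp(s·F)‖ ≤ κ·e^{−μ·s} for all s ≥ 0. Let w, ρ : ℝ → ℝⁿ with w continuous, ρ continuously differentiable, ‖w(t)‖ ≤ w̄, ‖ρ(t)‖ ≤ ρ̄ for all t, and let δ : ℝ → ℝⁿ be continuously differentiable. Let T_a ∈ ℝ, T > 0, and let ε : ℝ → ℝⁿ be differentiable and satisfy, for all t ≥ T_a, ε̇(t) = F·ε(t) + S·(w(t−T) + B·K·ρ(t−T)) − K1·(ρ(t−T) + δ(t)) − H·(ρ̇(t−T) + δ̇(t)). Let ē_{T_a} ≥ 0 and define ē(t) = κ·e^{−μ(t−T_a)}·(ē_{T_a} + ‖H‖·ρ̄) + ‖H‖·ρ̄ + ∫_{T_a}^{t}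 κ·e^{−μ(t−τ)}·(‖S‖·w̄ + ‖S·B·K − K̂‖·ρ̄) dτ, and r̄(t) = ē(t) + ρ̄. Assume ‖ε(T_a) + H·δ(T_a)‖ ≤ ē_{T_a}. If for some T_d with T_a ≤ T_d < T_a + T it holds that ‖S·δ(T_d) − ∫_{T_a}^{T_d} exp((T_d−τ)·F)·K̂·δ(τ) dτ‖ > 2·r̄(T_d), then the residual r(t) = ε(t) + ρ(t−T) + δ(t) satisfies ‖r(T_d)‖ > r̄(T_d); that is, the replay attack is detected at time T_d. -/
/-!
Put `z = ε + H δ + H ρ(· - T)`. Since `K̂ = K1 + F H`, the derivative terms cancel and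
`z' = F z + S w(· - T) + (S B K - K̂) ρ(· - T) - K̂ δ`, so variation of constants and the decay
of `exp(s F)` give `‖z(T_d) + ∫ exp((T_d - τ) F) K̂ δ‖ ≤ ē(T_d) - ‖H‖ ρ̄`: the watermark-free part
of the error stays within the stealthy envelope. Since `S = 1 - H`,
`S δ(T_d) - ∫ exp((T_d - τ) F) K̂ δ = r(T_d) - (z(T_d) + ∫ …) - S ρ(T_d - T)` with
`‖S‖ ≤ 1 + ‖H‖`, so the left side has norm at most `‖r(T_d)‖ + r̄(T_d)`.
-/

open NormedSpace intervalIntegral Set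

section LinearODE

variable {E : Type*} [NormedAddCommGroup E] [NormedSpace ℝ E]

theorem norm_exp_smul_apply_le {A : E →L[ℝ] E} {κ μ : ℝ}
    (hA : ∀ s : ℝ, 0 ≤ s → ‖exp (s • A)‖ ≤ κ * Real.exp (-μ * s))
    {s C : ℝ} (hs : 0 ≤ s) {v : E} (hv : ‖v‖ ≤ C) :
    ‖exp (s • A) v‖ ≤ κ * Real.exp (-μ * s) * C :=
  (exp (s • A)).le_opNorm_of_le hv |>.trans <|
    mul_le_mul_of_nonneg_right (hA s hs) ((norm_nonneg v).trans hv)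

theorem norm_integral_exp_smul_apply_le {A : E →L[ℝ] E} {κ μ : ℝ}
    (hA : ∀ s : ℝ, 0 ≤ s → ‖exp (s • A)‖ ≤ κ * Real.exp (-μ * s))
    {g : ℝ → E} {a t C : ℝ} (hat : a ≤ t) (hg : ∀ τ ∈ Ioc a t, ‖g τ‖ ≤ C) :
    ‖∫ τ in a..t, exp ((t - τ) • A) (g τ)‖ ≤ ∫ τ in a..t, κ * Real.exp (-μ * (t - τ)) * C :=
  norm_integral_le_of_norm_le hat
    (MeasureTheory.ae_of_all _ fun τ hτ => norm_exp_smul_apply_le hA (sub_nonneg.2 hτ.2) (hg τ hτ))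
    (Continuous.intervalIntegrable (by fun_prop) _ _)

variable [CompleteSpace E]

theorem continuous_exp_sub_smul (A : E →L[ℝ] E) (t : ℝ) :
    Continuous fun τ : ℝ => exp ((t - τ) • A) :=
  (differentiable_exp_smul_const ℝ A).continuous.comp (continuous_const.sub continuous_id)

/-- Variation of constants: `u ↦ exp((t - u) A) (e u)` has derivative `exp((t - u) A) (f u)`. -/
theorem eq_exp_smul_apply_add_integral_of_hasDerivAt {A : E →L[ℝ] E} {e f : ℝ → E} {a t : ℝ}
    (hat : a ≤ t) (he : ∀ s ∈ Icc a t, HasDerivAt e (A (e s) + f s) s)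
    (hf : ContinuousOn f (Icc a t)) :
    e t = exp ((t - a) • A) (e a) + ∫ τ in a..t, exp ((t - τ) • A) (f τ) := by
  have hderiv : ∀ s ∈ uIcc a t, HasDerivAt (fun u => exp ((t - u) • A) (e u))
      (exp ((t - s) • A) (f s)) s := by
    intro s hs
    rw [uIcc_of_le hat] at hs
    have hexp := (hasDerivAt_exp_smul_const (𝕂 := ℝ) A (t - s)).comp_const_sub t s
    convert hexp.clm_apply (he s hs) using 1
    simp only [neg_apply, mul_apply_eq_comp, map_add]
    abel
  have hint : IntervalIntegrable (fun τ => exp ((t - τ) • A) (f τ)) MeasureTheory.volume a t :=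
    ((continuous_exp_sub_smul A t).continuousOn.clm_apply hf).intervalIntegrable_of_Icc hat
  rw [integral_eq_sub_of_hasDerivAt hderiv hint]
  simp

theorem norm_add_integral_exp_smul_apply_le {A : E →L[ℝ] E} {κ μ : ℝ}
    (hA : ∀ s : ℝ, 0 ≤ s → ‖exp (s • A)‖ ≤ κ * Real.exp (-μ * s))
    {z g h : ℝ → E} {a t C₀ C : ℝ} (hat : a ≤ t)
    (hz : ∀ s ∈ Icc a t, HasDerivAt z (A (z s) + (g s - h s)) s)
    (hg : ContinuousOn g (Icc a t)) (hh : ContinuousOn h (Icc a t))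
    (hz₀ : ‖z a‖ ≤ C₀) (hgC : ∀ τ ∈ Ioc a t, ‖g τ‖ ≤ C) :
    ‖z t + ∫ τ in a..t, exp ((t - τ) • A) (h τ)‖
      ≤ κ * Real.exp (-μ * (t - a)) * C₀ + ∫ τ in a..t, κ * Real.exp (-μ * (t - τ)) * C := by
  have hexp := (continuous_exp_sub_smul A t).continuousOn (s := Icc a t)
  have hsplit : ∫ τ in a..t, exp ((t - τ) • A) (g τ - h τ)
      = (∫ τ in a..t, exp ((t - τ) • A) (g τ)) - ∫ τ in a..t, exp ((t - τ) • A) (h τ) := by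
    simp only [map_sub]
    exact integral_sub ((hexp.clm_apply hg).intervalIntegrable_of_Icc hat)
      ((hexp.clm_apply hh).intervalIntegrable_of_Icc hat)
  have hvc := eq_exp_smul_apply_add_integral_of_hasDerivAt hat hz (hg.sub hh)
  rw [hsplit] at hvc
  rw [hvc, add_assoc, sub_add_cancel]
  exact (norm_add_le _ _).trans (add_le_add (norm_exp_smul_apply_le hA (sub_nonneg.2 hat) hz₀)
    (norm_integral_exp_smul_apply_le hA hat hgC))

end LinearODE

theorem hasDerivAt_unwatermarked_error {E : Type*} [NormedAddCommGroup E] [NormedSpace ℝ E]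
    {F S H K1 Khat B K : E →L[ℝ] E} (hKhat : Khat = K1 + F * H)
    {w ρ ρ' δ δ' ε : ℝ → E} {T t : ℝ}
    (hρ : HasDerivAt ρ (ρ' (t - T)) (t - T)) (hδ : HasDerivAt δ (δ' t) t)
    (hε : HasDerivAt ε (F (ε t) + S (w (t - T) + (B * K) (ρ (t - T)))
      - K1 (ρ (t - T) + δ t) - H (ρ' (t - T) + δ' t)) t) :
    HasDerivAt (fun u => ε u + H (δ u) + H (ρ (u - T)))
      (F (ε t + H (δ t) + H (ρ (t - T)))
        + ((S (w (t - T)) + (S * B * K - Khat) (ρ (t - T))) - Khat (δ t))) t := by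
  have hHδ := H.hasFDerivAt.comp_hasDerivAt t hδ
  have hHρ := H.hasFDerivAt.comp_hasDerivAt t (hρ.comp_sub_const t T)
  refine ((hε.add hHδ).add hHρ).congr_deriv ?_
  simp only [hKhat, sub_apply, add_apply, mul_apply_eq_comp, map_add]
  abel

theorem replay_attack_detectable_general {n : ℕ}
    (F S H K1 Khat B K : EuclideanSpace ℝ (Fin n) →L[ℝ] EuclideanSpace ℝ (Fin n))
    (hKhat : Khat = K1 + F * H) (hS : S = 1 - H)
    (κ μ : ℝ)
    (hFdecay : ∀ s : ℝ, 0 ≤ s → ‖NormedSpace.exp (s • F)‖ ≤ κ * Real.exp (-μ * s))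
    (w ρ ρ' δ δ' : ℝ → EuclideanSpace ℝ (Fin n))
    (wbar ρbar : ℝ)
    (hw : Continuous w)
    (hρ : ∀ t : ℝ, HasDerivAt ρ (ρ' t) t)
    (hδ : ∀ t : ℝ, HasDerivAt δ (δ' t) t)
    (hwbound : ∀ t : ℝ, ‖w t‖ ≤ wbar)
    (hρbound : ∀ t : ℝ, ‖ρ t‖ ≤ ρbar)
    (T_a T : ℝ)
    (ε : ℝ → EuclideanSpace ℝ (Fin n))
    (hode : ∀ t : ℝ, T_a ≤ t →
      HasDerivAt ε
        (F (ε t) + S (w (t - T) + (B * K) (ρ (t - T)))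
          - K1 (ρ (t - T) + δ t) - H (ρ' (t - T) + δ' t)) t)
    (ebarTa : ℝ)
    (ebar rbar : ℝ → ℝ)
    (hebar : ∀ t : ℝ, ebar t =
      κ * Real.exp (-μ * (t - T_a)) * (ebarTa + ‖H‖ * ρbar) + ‖H‖ * ρbar
      + ∫ τ in T_a..t,
          κ * Real.exp (-μ * (t - τ)) * (‖S‖ * wbar + ‖S * B * K - Khat‖ * ρbar))
    (hrbar : ∀ t : ℝ, rbar t = ebar t + ρbar)
    (hinit : ‖ε T_a + H (δ T_a)‖ ≤ ebarTa)
    (T_d : ℝ) (hTd1 : T_a ≤ T_d)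
    (hdetect :
      ‖S (δ T_d)
        - ∫ τ in T_a..T_d, (NormedSpace.exp ((T_d - τ) • F)) (Khat (δ τ))‖
        > 2 * rbar T_d) :
    ‖ε T_d + ρ (T_d - T) + δ T_d‖ > rbar T_d := by
  have hρc : Continuous ρ := continuous_iff_continuousAt.2 fun t => (hρ t).continuousAt
  have hδc : Continuous δ := continuous_iff_continuousAt.2 fun t => (hδ t).continuousAt
  set z := fun u => ε u + H (δ u) + H (ρ (u - T))
  set I := ∫ τ in T_a..T_d, exp ((T_d - τ) • F) (Khat (δ τ))
  have hz : ‖z T_d + I‖ ≤ ebar T_d - ‖H‖ * ρbar := by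
    rw [hebar T_d, add_sub_right_comm, add_sub_cancel_right]
    refine norm_add_integral_exp_smul_apply_le hFdecay hTd1
      (fun s hs => hasDerivAt_unwatermarked_error hKhat (hρ _) (hδ s) (hode s hs.1))
      (by fun_prop) (by fun_prop)
      ((norm_add_le _ _).trans (add_le_add hinit (H.le_opNorm_of_le (hρbound _))))
      fun τ _ => (norm_add_le _ _).trans (add_le_add (S.le_opNorm_of_le (hwbound _))
        (ContinuousLinearMap.le_opNorm_of_le _ (hρbound _)))
  have hρbar : 0 ≤ ρbar := (norm_nonneg _).trans (hρbound 0)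
  have hSρ : ‖S (ρ (T_d - T))‖ ≤ (1 + ‖H‖) * ρbar := by
    refine S.le_opNorm_of_le (hρbound _) |>.trans (mul_le_mul_of_nonneg_right ?_ hρbar)
    rw [hS]
    exact (norm_sub_le _ _).trans (add_le_add_left ContinuousLinearMap.norm_id_le _)
  have hresidual : S (δ T_d) - I
      = (ε T_d + ρ (T_d - T) + δ T_d) - (z T_d + I) - S (ρ (T_d - T)) := by
    simp only [z, hS, sub_apply, one_apply_eq_self]
    abel
  have htri := norm_sub_le_of_le (norm_sub_le (ε T_d + ρ (T_d - T) + δ T_d) (z T_d + I))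
    (le_refl ‖S (ρ (T_d - T))‖)
  rw [← hresidual] at htri
  linarith [hrbar T_d]

/-- **Detectability of replay attacks under watermarking (Statement 4,
Proposition 2).**
Matrices are continuous linear maps on Euclidean space (so `‖·‖` is the
operator norm induced by the Euclidean norm), with matrix product `*` and
identity `1`. Assume `Khat = K1 + F·H`, `S = I − H`, `κ, μ > 0` with
`‖exp(s F)‖ ≤ κ e^{−μ s}` for `s ≥ 0`, bounded noises, `T > 0`, the
watermarked error dynamics for `t ≥ T_a`, and the stealthiness condition
`‖ε(T_a) + H δ(T_a)‖ ≤ ebarTa`. If at some `T_d ∈ [T_a, T_a + T)`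
`‖S δ(T_d) − ∫_{T_a}^{T_d} exp((T_d−τ) F) Khat δ(τ) dτ‖ > 2 rbar(T_d)`,
then the residual `r(t) = ε(t) + ρ(t−T) + δ(t)` satisfies
`‖r(T_d)‖ > rbar(T_d)`, i.e. the replay attack is detected at `T_d`. -/
theorem replay_attack_detectable {n : ℕ}
    (F S H K1 Khat B K : EuclideanSpace ℝ (Fin n) →L[ℝ] EuclideanSpace ℝ (Fin n))
    (hKhat : Khat = K1 + F * H) (hS : S = 1 - H)
    (κ μ : ℝ) (hκ : 0 < κ) (hμ : 0 < μ)
    (hFdecay : ∀ s : ℝ, 0 ≤ s → ‖NormedSpace.exp (s • F)‖ ≤ κ * Real.exp (-μ * s))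
    (w ρ ρ' δ δ' : ℝ → EuclideanSpace ℝ (Fin n))
    (wbar ρbar : ℝ)
    (hw : Continuous w)
    (hρ : ∀ t : ℝ, HasDerivAt ρ (ρ' t) t) (hρ' : Continuous ρ')
    (hδ : ∀ t : ℝ, HasDerivAt δ (δ' t) t) (hδ' : Continuous δ')
    (hwbound : ∀ t : ℝ, ‖w t‖ ≤ wbar)
    (hρbound : ∀ t : ℝ, ‖ρ t‖ ≤ ρbar)
    (T_a T : ℝ) (hT : 0 < T)
    (ε : ℝ → EuclideanSpace ℝ (Fin n))
    (hode : ∀ t : ℝ, T_a ≤ t →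
      HasDerivAt ε
        (F (ε t) + S (w (t - T) + (B * K) (ρ (t - T)))
          - K1 (ρ (t - T) + δ t) - H (ρ' (t - T) + δ' t)) t)
    (ebarTa : ℝ) (hebarTa : 0 ≤ ebarTa)
    (ebar rbar : ℝ → ℝ)
    (hebar : ∀ t : ℝ, ebar t =
      κ * Real.exp (-μ * (t - T_a)) * (ebarTa + ‖H‖ * ρbar) + ‖H‖ * ρbar
      + ∫ τ in T_a..t,
          κ * Real.exp (-μ * (t - τ)) * (‖S‖ * wbar + ‖S * B * K - Khat‖ * ρbar))
    (hrbar : ∀ t : ℝ, rbar t = ebar t + ρbar)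
    (hinit : ‖ε T_a + H (δ T_a)‖ ≤ ebarTa)
    (T_d : ℝ) (hTd1 : T_a ≤ T_d) (hTd2 : T_d < T_a + T)
    (hdetect :
      ‖S (δ T_d)
        - ∫ τ in T_a..T_d, (NormedSpace.exp ((T_d - τ) • F)) (Khat (δ τ))‖
        > 2 * rbar T_d) :
    ‖ε T_d + ρ (T_d - T) + δ T_d‖ > rbar T_d :=
  replay_attack_detectable_general F S H K1 Khat B K hKhat hS κ μ hFdecay w ρ ρ' δ δ' wbar ρbar hw
    hρ hδ hwbound hρbound T_a T ε hode ebarTa ebar rbar hebar hrbar hinit T_d hTd1 hdetect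
end

section
/- Let T̄ > 0, c ≠ 0 be reals and define the sawtooth watermark Δ : ℝ → ℝ by Δ(t) = c·(t − 2·T̄·⌊t/(2·T̄)⌋). Then for every T with 0 < T ≤ T̄ and every t ∈ ℝ, the watermark mismatch δ(t) = Δ(t−T) − Δ(t) takes one of exactly two values, δ(t) ∈ {−c·T, c·(2·T̄ − T)}, and in particular δ(t) ≠ 0 for all t. -/
/-- **The sawtooth watermark mismatch never vanishes (Statement 8).**
Let `Tbar > 0`, `c ≠ 0`, and let `Δ(t) = c (t − 2 Tbar ⌊t / (2 Tbar)⌋)` be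
the sawtooth watermark of slope `c` and period `2 Tbar`. Then for every
replay period `T` with `0 < T ≤ Tbar` and every `t`, the mismatch
`δ(t) = Δ(t−T) − Δ(t)` takes one of exactly the two values `−c T` and
`c (2 Tbar − T)`, and in particular `δ(t) ≠ 0`. -/
theorem sawtooth_mismatch_two_values (Tbar c : ℝ) (hTbar : 0 < Tbar) (hc : c ≠ 0)
    (Δ : ℝ → ℝ)
    (hΔ : ∀ t : ℝ, Δ t = c * (t - 2 * Tbar * (⌊t / (2 * Tbar)⌋ : ℤ)))
    (T : ℝ) (hT0 : 0 < T) (hTT : T ≤ Tbar)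
    (δ : ℝ → ℝ) (hδ : ∀ t : ℝ, δ t = Δ (t - T) - Δ t) :
    ∀ t : ℝ, δ t ∈ ({-(c * T), c * (2 * Tbar - T)} : Set ℝ) ∧ δ t ≠ 0 := by
  intro t
  have hs : (0:ℝ) < 2 * Tbar := by linarith
  set s : ℝ := 2 * Tbar with hs'
  have ha0 : 0 < T / s := div_pos hT0 hs
  have ha1 : T / s < 1 := (div_lt_one hs).2 (by linarith)
  have hsub : (t - T) / s = t / s - T / s := by ring
  -- floor bounds
  have hle : ⌊(t - T) / s⌋ ≤ ⌊t / s⌋ := by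
    apply Int.floor_le_floor
    rw [hsub]; linarith
  have hge : ⌊t / s⌋ - 1 ≤ ⌊(t - T) / s⌋ := by
    have : t / s - 1 ≤ (t - T) / s := by rw [hsub]; linarith
    calc ⌊t / s⌋ - 1 = ⌊t / s - 1⌋ := by rw [Int.floor_sub_one]
      _ ≤ ⌊(t - T) / s⌋ := Int.floor_le_floor this
  have hδt : δ t = c * (-T + s * (⌊t / s⌋ - ⌊(t - T) / s⌋ : ℤ)) := by
    rw [hδ, hΔ, hΔ]
    push_cast
    ring
  have hnz : δ t ≠ 0 → True := fun _ => trivial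
  have hcases : ⌊t / s⌋ - ⌊(t - T) / s⌋ = 0 ∨ ⌊t / s⌋ - ⌊(t - T) / s⌋ = 1 := by omega
  rcases hcases with h | h
  · refine ⟨Or.inl ?_, ?_⟩
    · show δ t = -(c * T); rw [hδt, h]; push_cast; ring
    · rw [hδt, h]; push_cast
      intro hcontra
      have : c * T = 0 := by linarith [hcontra]
      rcases mul_eq_zero.1 this with h' | h'
      · exact hc h'
      · linarith
  · refine ⟨Or.inr ?_, ?_⟩
    · show δ t = c * (2 * Tbar - T); rw [hδt, h]; push_cast; rw [hs']; ring
    · rw [hδt, h]; push_cast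
      intro hcontra
      have h2 : c * (s - T) = 0 := by linarith [hcontra]
      rcases mul_eq_zero.1 h2 with h' | h'
      · exact hc h'
      · rw [hs'] at h'; linarith
end
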